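/- arXiv:2204.04695 — 4 statements merged into one kernel-verified Lean document; each statement's English description precedes it below -/
import Mathlib

section
/- Let Λ be a finite-dimensional selfinjective k-algebra, Q a finite acyclic quiver, and M a separated monic representation of Q over Λ. Then there exists a short exact sequence 0 → I → M → N → 0 of ΛQ-modules such that I is a projective object in the category of Gorenstein-projective ΛQ-modules and no branch N_i of N has a nonzero projective direct summand. -/
open Function LinearMap

/-- A representation of the quiver with vertex set `V` and arrow family `E`
over the ring `Λ`: a `Λ`-module at every vertex and a linear map along every arrow. -/
structure QRep (Λ : Type) [Ring Λ] {V : Type} (E : V → V → Type) : Type 1 where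
  obj : V → Type
  [acg : ∀ i, AddCommGroup (obj i)]
  [mod : ∀ i, Module Λ (obj i)]
  map : ∀ {i j : V}, E i j → (obj i →ₗ[Λ] obj j)

attribute [instance] QRep.acg QRep.mod

namespace QRep

variable {Λ : Type} [Ring Λ] {V : Type} {E : V → V → Type}

/-- Morphisms of representations. -/
@[ext]
structure Hom (X Y : QRep Λ E) where
  app : ∀ i, X.obj i →ₗ[Λ] Y.obj i
  comm : ∀ {i j : V} (a : E i j), (Y.map a).comp (app i) = (app j).comp (X.map a)

def Hom.id (X : QRep Λ E) : Hom X X :=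
  ⟨fun _ => LinearMap.id, fun _ => by ext; rfl⟩

def Hom.comp {X Y Z : QRep Λ E} (g : Hom Y Z) (f : Hom X Y) : Hom X Z :=
  ⟨fun i => (g.app i).comp (f.app i), fun {i j} a => by
    ext x
    have h1 := LinearMap.congr_fun (f.comm a) x
    have h2 := LinearMap.congr_fun (g.comm a) (f.app i x)
    simp only [LinearMap.comp_apply] at h1 h2 ⊢
    rw [h2, h1]⟩

def Hom.sub {X Y : QRep Λ E} (f g : Hom X Y) : Hom X Y :=
  ⟨fun i => f.app i - g.app i, fun {i j} a => by
    ext x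
    have h1 := LinearMap.congr_fun (f.comm a) x
    have h2 := LinearMap.congr_fun (g.comm a) x
    simp only [LinearMap.comp_apply, LinearMap.sub_apply, map_sub] at h1 h2 ⊢
    rw [h1, h2]⟩

/-- Two representations are isomorphic. -/
def Iso (X Y : QRep Λ E) : Prop :=
  ∃ f : Hom X Y, ∀ i, Function.Bijective (f.app i)

/-- The assembled map `⊕_{a : j → i} X_j → X_i` at a vertex `i`. -/
noncomputable def uMap (X : QRep Λ E) (i : V) :
    (DirectSum (Σ j : V, E j i) (fun a => X.obj a.1)) →ₗ[Λ] X.obj i := by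
  classical exact DirectSum.toModule Λ _ _ (fun a => X.map a.2)

/-- A representation is separated monic if at every vertex the assembled map
from the direct sum of the incoming branches is injective. -/
def SeparatedMonic (X : QRep Λ E) : Prop :=
  ∀ i : V, Function.Injective (X.uMap i)

/-- Paths in the quiver given by the arrow family `E`. -/
def Path (E : V → V → Type) (i j : V) : Type := @Quiver.Path V ⟨E⟩ i j

/-- The quiver is acyclic: no nontrivial oriented cycles. -/
def Acyclic (E : V → V → Type) : Prop :=
  ∀ i : V, ∀ p : Path E i i, p = @Quiver.Path.nil V ⟨E⟩ i

/-- The representation `P_n(A) = A ⊗ P(n)`: at vertex `i` a copy of `A` for every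
path from `n` to `i`. -/
noncomputable def Pn (Λ : Type) [Ring Λ] (E : V → V → Type) (n : V) (A : Type)
    [AddCommGroup A] [Module Λ A] : QRep Λ E where
  obj i := Path E n i →₀ A
  map {i j} a := Finsupp.lmapDomain A Λ (fun p => @Quiver.Path.cons V ⟨E⟩ n i j p a)

/-- Projectivity of a representation, via the lifting property against
componentwise surjections of representations. -/
def Projective (P : QRep Λ E) : Prop :=
  ∀ (X Y : QRep Λ E) (g : Hom X Y), (∀ i, Function.Surjective (g.app i)) →
    ∀ f : Hom P Y, ∃ f' : Hom P X, g.comp f' = f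

/-- A module has no nonzero projective direct summand. -/
def NoProjSummand (Λ : Type) [Ring Λ] (M : Type) [AddCommGroup M] [Module Λ M] : Prop :=
  ∀ (P C : Type) [AddCommGroup P] [Module Λ P] [AddCommGroup C] [Module Λ C],
    Module.Projective Λ P → Nonempty (M ≃ₗ[Λ] P × C) → Subsingleton P

/-- A module has no nonzero injective direct summand. -/
def NoInjSummand (Λ : Type) [Ring Λ] (M : Type) [AddCommGroup M] [Module Λ M] : Prop :=
  ∀ (P C : Type) [AddCommGroup P] [Module Λ P] [AddCommGroup C] [Module Λ C],
    Module.Injective Λ P → Nonempty (M ≃ₗ[Λ] P × C) → Subsingleton P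

/-- A linear map factors through an injective module. -/
def FactorsThroughInjective (Λ : Type) [Ring Λ] {A B : Type}
    [AddCommGroup A] [Module Λ A] [AddCommGroup B] [Module Λ B] (f : A →ₗ[Λ] B) : Prop :=
  ∃ (J : Type) (_ : AddCommGroup J) (_ : Module Λ J), Module.Injective Λ J ∧
    ∃ (g : A →ₗ[Λ] J) (h : J →ₗ[Λ] B), f = h.comp g

/-- A morphism of representations factors through a projective representation. -/
def FactorsThroughProjective {X Y : QRep Λ E} (f : Hom X Y) : Prop :=
  ∃ (P : QRep Λ E), Projective P ∧ SeparatedMonic P ∧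
    ∃ (u : Hom X P) (v : Hom P Y), f = v.comp u

/-- Stable isomorphism: isomorphism in the stable category of Gorenstein-projective
representations modulo projectives. -/
def StIso (X Y : QRep Λ E) : Prop :=
  ∃ (f : Hom X Y) (g : Hom Y X),
    FactorsThroughProjective ((g.comp f).sub (Hom.id X)) ∧
    FactorsThroughProjective ((f.comp g).sub (Hom.id Y))

/-- `e : M →ₗ J` is an injective envelope: `J` is injective, `e` is injective and
its image is essential in `J`. -/
def IsInjEnvelope {M J : Type} [AddCommGroup M] [Module Λ M] [AddCommGroup J]
    [Module Λ J] (e : M →ₗ[Λ] J) : Prop :=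
  Module.Injective Λ J ∧ Function.Injective e ∧
    ∀ W : Submodule Λ J, Disjoint W (LinearMap.range e) → W = ⊥

end QRep
section MonoACons

variable {Λ : Type} [Ring Λ] {V : Type} {E : V → V → Type}

open QRep

namespace QRep

open Classical in
/-- The map `E_β` in the `Mono_α` construction: it is `single nil ∘ e` when `β = α`
and zero otherwise. -/
noncomputable def EMap (M : QRep Λ E) {v w : V} (α : E v w) {J : Type} [AddCommGroup J]
    [Module Λ J] (e : M.obj v →ₗ[Λ] J) {i j : V} (β : E i j) :
    M.obj i →ₗ[Λ] (Path E w j →₀ J) :=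
  if h : (⟨i, ⟨j, β⟩⟩ : Σ a : V, Σ b : V, E a b) = ⟨v, ⟨w, α⟩⟩ then by
    obtain ⟨h1, h2⟩ := Sigma.mk.inj_iff.mp h
    subst h1
    obtain ⟨h3, _⟩ := Sigma.mk.inj_iff.mp (eq_of_heq h2)
    subst h3
    exact (Finsupp.lsingle (R := Λ) (M := J) (@Quiver.Path.nil V ⟨E⟩ _)).comp e
  else 0

/-- The construction `Mono_α(M)`: the middle term of the componentwise split short
exact sequence `0 → P_w(J) → Mono_α(M) → M → 0` twisted by `e` at the arrow `α`. -/
noncomputable def MonoA (M : QRep Λ E) {v w : V} (α : E v w) {J : Type} [AddCommGroup J]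
    [Module Λ J] (e : M.obj v →ₗ[Λ] J) : QRep Λ E where
  obj i := M.obj i × (Path E w i →₀ J)
  map {i j} β := LinearMap.prod
    ((M.map β).comp (LinearMap.fst Λ _ _))
    ((Finsupp.lmapDomain J Λ (fun p => @Quiver.Path.cons V ⟨E⟩ w i j p β)).comp
        (LinearMap.snd Λ _ _)
      + (EMap M α e β).comp (LinearMap.fst Λ _ _))

/-- The canonical projection `Mono_α(M) → M`. -/
noncomputable def MonoAProj (M : QRep Λ E) {v w : V} (α : E v w) {J : Type} [AddCommGroup J]
    [Module Λ J] (e : M.obj v →ₗ[Λ] J) : Hom (MonoA M α e) M :=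
  ⟨fun _ => LinearMap.fst Λ _ _, fun {i j} β => by ext x; rfl⟩

/-- `IsMonoIter L M N π` holds when `N`, together with the projection `π : N → M`,
is obtained from `M` by successively applying the `Mono` construction at the arrows in
the list `L` (the head of `L` applied last), each time using an injective envelope. -/
inductive IsMonoIter : ∀ (L : List (Σ i : V, Σ j : V, E i j)) (M N : QRep Λ E), Hom N M → Prop
  | nil (M : QRep Λ E) : IsMonoIter [] M M (Hom.id M)
  | cons {L : List (Σ i : V, Σ j : V, E i j)} {M N : QRep Λ E} {π : Hom N M} {v w : V}
      (α : E v w) {J : Type} [AddCommGroup J] [Module Λ J] (e : N.obj v →ₗ[Λ] J)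
      (henv : IsInjEnvelope e) (h : IsMonoIter L M N π) :
      IsMonoIter (⟨v, ⟨w, α⟩⟩ :: L) M (MonoA N α e) (π.comp (MonoAProj N α e))

/-- `π : G → M` is a right approximation of `M` in the category of
Gorenstein-projective (= separated monic) representations. -/
def IsRightApprox {G M : QRep Λ E} (π : Hom G M) : Prop :=
  SeparatedMonic G ∧
    ∀ G' : QRep Λ E, SeparatedMonic G' → ∀ f : Hom G' M, ∃ g : Hom G' G, π.comp g = f

/-- `π : A → M` is the minimal right approximation of `M` in Gproj. -/
def IsMimo {M A : QRep Λ E} (π : Hom A M) : Prop :=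
  IsRightApprox π ∧ ∀ φ : Hom A A, π.comp φ = π → ∀ i, Function.Bijective (φ.app i)

end QRep
end MonoACons
namespace QRep

variable {Λ : Type} [Ring Λ] {V : Type} {E : V → V → Type}

/-- The reflected quiver `Q(v)`: every arrow ending at `v` is reversed. An arrow
`i → j` of `Q(v)` is either an arrow `i → j` of `Q` with `j ≠ v`, or the reversal
of an arrow `j → v` of `Q` (in which case `i = v`). -/
def reflE (E : V → V → Type) (v : V) : V → V → Type :=
  fun i j => {a : E i j // j ≠ v} ⊕ (PLift (i = v) × E j v)

/-- The representation `X'(v)` of the reflected quiver: the branch at `v` is replaced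
by `Ω`, the structure maps at the reversed arrows being the components of `kmap`. -/
noncomputable def reflRep (X : QRep Λ E) (v : V) (hsink : ∀ j, IsEmpty (E v j))
    (Ω : Type) [AddCommGroup Ω] [Module Λ Ω]
    (kmap : Ω →ₗ[Λ] DirectSum (Σ j : V, E j v) (fun a => X.obj a.1)) :
    QRep Λ (reflE E v) where
  obj i := (PLift (i = v) → Ω) × (PLift (i ≠ v) → X.obj i)
  map {i j} a :=
    match a with
    | Sum.inl ⟨a, _⟩ => LinearMap.prod 0
        (LinearMap.pi fun _ : PLift (j ≠ v) =>
          (X.map a).comp ((LinearMap.proj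
            (⟨fun h => (hsink j).false (h ▸ a)⟩ : PLift (i ≠ v))).comp
              (LinearMap.snd Λ _ _)))
    | Sum.inr ⟨hiv, a⟩ => LinearMap.prod 0
        (LinearMap.pi fun _ : PLift (j ≠ v) =>
          (((DirectSum.component Λ (Σ j : V, E j v) (fun b => X.obj b.1) ⟨j, a⟩).comp
              kmap).comp ((LinearMap.proj hiv).comp (LinearMap.fst Λ _ _))))

/-- The reflection relation: `Z` is (the result of) the reflection `X(v)` of the
Gorenstein-projective representation `X` at the sink `v`; it is obtained from the
representation `X'(v)` (defined via a projective cover `δ : C → coker u_X` with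
kernel `Ω` and the lifted kernel map `kmap`) by the `Mono` construction at all
reversed arrows. -/
def IsReflectionAt (X : QRep Λ E) (v : V) (hsink : ∀ j, IsEmpty (E v j))
    (Z : QRep Λ (reflE E v)) : Prop :=
  ∃ (Xbar : Type) (_ : AddCommGroup Xbar) (_ : Module Λ Xbar) (πc : X.obj v →ₗ[Λ] Xbar)
    (C : Type) (_ : AddCommGroup C) (_ : Module Λ C) (δ : C →ₗ[Λ] Xbar)
    (kmap : ↥(LinearMap.ker δ) →ₗ[Λ] DirectSum (Σ j : V, E j v) (fun a => X.obj a.1))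
    (t : C →ₗ[Λ] X.obj v),
    Function.Surjective πc ∧ LinearMap.ker πc = LinearMap.range (X.uMap v) ∧
    Module.Projective Λ C ∧ Function.Surjective δ ∧
    (∀ W : Submodule Λ C, W ⊔ LinearMap.ker δ = ⊤ → W = ⊤) ∧
    πc.comp t = δ ∧ (X.uMap v).comp kmap = t.comp (LinearMap.ker δ).subtype ∧
    ∃ (L : List (Σ i : V, Σ j : V, reflE E v i j))
      (π : Hom Z (reflRep X v hsink (↥(LinearMap.ker δ)) kmap)),
      (∀ x ∈ L, x.1 = v) ∧ L.Nodup ∧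
      (∀ (j : V) (a : E j v),
        (⟨v, j, Sum.inr ⟨⟨rfl⟩, a⟩⟩ : Σ i : V, Σ j : V, reflE E v i j) ∈ L) ∧
      IsMonoIter L (reflRep X v hsink (↥(LinearMap.ker δ)) kmap) Z π

/-- Transport of a representation along a family of bijections of arrow types. -/
def transport {E' : V → V → Type} (σ : ∀ i j, E i j ≃ E' i j) (X : QRep Λ E) :
    QRep Λ E' where
  obj := X.obj
  map {i j} a := X.map ((σ i j).symm a)

/-- `A'` is a (representation-level) syzygy of `A` in the Frobenius category of
Gorenstein-projective representations. -/
def IsSyzRep (A' A : QRep Λ E) : Prop :=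
  ∃ (P : QRep Λ E) (ι : Hom A' P) (π : Hom P A), Projective P ∧ SeparatedMonic P ∧
    (∀ i, Function.Injective (ι.app i)) ∧ (∀ i, Function.Surjective (π.app i)) ∧
    (∀ i, LinearMap.range (ι.app i) = LinearMap.ker (π.app i))

/-- `C` is a double syzygy `Ω²(A)`. -/
def IsOmega2 (A C : QRep Λ E) : Prop :=
  ∃ A', IsSyzRep A' A ∧ IsSyzRep C A'

end QRep

open CategoryTheory

/-- The category of Gorenstein-projective (= separated monic) representations. -/
def GP (Λ : Type) [Ring Λ] {V : Type} (E : V → V → Type) : Type 1 :=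
  {X : QRep Λ E // QRep.SeparatedMonic X}

instance (Λ : Type) [Ring Λ] {V : Type} (E : V → V → Type) :
    Category (GP Λ E) where
  Hom X Y := QRep.Hom X.1 Y.1
  id X := QRep.Hom.id X.1
  comp f g := g.comp f
  id_comp f := by apply QRep.Hom.ext; funext i; exact LinearMap.comp_id _
  comp_id f := by apply QRep.Hom.ext; funext i; exact LinearMap.id_comp _
  assoc f g h := by apply QRep.Hom.ext; funext i; rfl

/-- The relation identifying two morphisms whose difference factors through a
projective object. -/
def stRel (Λ : Type) [Ring Λ] {V : Type} (E : V → V → Type) : HomRel (GP Λ E) :=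
  fun {X Y} f g => QRep.FactorsThroughProjective (f.sub g)

/-- The stable category of Gorenstein-projective representations modulo projectives. -/
def StableGP (Λ : Type) [Ring Λ] {V : Type} (E : V → V → Type) : Type 1 :=
  CategoryTheory.Quotient (stRel Λ E)

noncomputable instance (Λ : Type) [Ring Λ] {V : Type} (E : V → V → Type) :
    Category (StableGP Λ E) :=
  inferInstanceAs (Category (CategoryTheory.Quotient (stRel Λ E)))

/-!
Choose submodules `Bₙ ⊆ Mₙ` by well-founded recursion along the finite acyclic quiver and let
`Φ : I = ⊕ₙ Pₙ(Bₙ) → M` be induced by the inclusions; `I` is projective once the `Bₙ` are, and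
always separated monic. At a vertex, `Iₙ = Bₙ ⊕ ⨁_{j → n} Iⱼ`, and on the second summand `Φₙ`
is `u_M ∘ ⨁ Φⱼ`, injective by induction because `M` is separated monic. Its image `Uₙ` is thus
a finite direct sum of finitely generated projectives `Bₘ` with `m` before `n`, hence injective
because `Λ` is selfinjective, so `Uₙ` is a direct summand of `Mₙ`. From its (Artinian)
complement split off a projective summand `Bₙ` such that the rest `Rₙ` has no nonzero
projective summand. Then `Φₙ` is injective and `Nₙ = Mₙ / (Uₙ ⊕ Bₙ) ≅ Rₙ`.
-/

theorem DirectSum.range_toModule {R ι N : Type*} [Semiring R] [DecidableEq ι]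
    {A : ι → Type*} [∀ i, AddCommMonoid (A i)] [∀ i, Module R (A i)] [AddCommMonoid N]
    [Module R N] (φ : ∀ i, A i →ₗ[R] N) :
    range (DirectSum.toModule R ι N φ) = ⨆ i, range (φ i) := by
  refine le_antisymm ?_ (iSup_le fun i => ?_)
  · rintro _ ⟨x, rfl⟩
    induction x using DirectSum.induction_on with
    | zero => simp
    | of i y =>
      rw [← DirectSum.lof_eq_of R, DirectSum.toModule_lof]
      exact Submodule.mem_iSup_of_mem i (mem_range_self _ y)
    | add a b ha hb => rw [map_add]; exact add_mem ha hb
  · rintro _ ⟨y, rfl⟩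
    exact ⟨DirectSum.lof R ι A i y, DirectSum.toModule_lof R _ _⟩

section ModuleLemmas

universe u

variable {R : Type u} [Ring R] {M N : Type u} [AddCommGroup M] [Module R M]
  [AddCommGroup N] [Module R N]

theorem Module.Injective.of_retract [hN : Module.Injective R N] (s : M →ₗ[R] N)
    (r : N →ₗ[R] M) (hrs : r ∘ₗ s = LinearMap.id) : Module.Injective R M := by
  refine ⟨fun X Y _ _ _ _ f hf g => ?_⟩
  obtain ⟨h, hh⟩ := hN.out f hf (s ∘ₗ g)
  exact ⟨r ∘ₗ h, fun x => by simp [hh x, ← LinearMap.comp_apply r s, hrs]⟩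

theorem Module.Injective.of_linearEquiv [Module.Injective R N] (e : M ≃ₗ[R] N) :
    Module.Injective R M :=
  .of_retract e.toLinearMap e.symm.toLinearMap (by ext; simp)

theorem Module.Injective.directSum {ι : Type u} [Finite ι] {A : ι → Type u}
    [∀ i, AddCommGroup (A i)] [∀ i, Module R (A i)] [∀ i, Module.Injective R (A i)] :
    Module.Injective R (DirectSum ι A) := by
  have := Fintype.ofFinite ι
  exact .of_linearEquiv (DirectSum.linearEquivFunOnFintype R ι A)

theorem Module.injective_of_finite_of_projective [Module.Injective R R]
    [Module.Finite R M] [Module.Projective R M] : Module.Injective R M := by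
  obtain ⟨n, π, hπ⟩ := Module.Finite.exists_fin' R M
  obtain ⟨s, hs⟩ := Module.projective_lifting_property π LinearMap.id hπ
  exact .of_retract s π hs

theorem Submodule.exists_isCompl_of_injective (U : Submodule R M) [Module.Injective R U] :
    ∃ W, IsCompl U W := by
  obtain ⟨r, hr⟩ := Module.Injective.out (R := R) (Q := U) U.subtype Subtype.val_injective
    LinearMap.id
  exact ⟨_, LinearMap.isCompl_of_proj hr⟩

theorem Submodule.projective_sup_of_disjoint {p q : Submodule R M} (h : Disjoint p q)
    [Module.Projective R p] [Module.Projective R q] : Module.Projective R ↥(p ⊔ q) := by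
  have hinj : Function.Injective (p.subtype.coprod q.subtype) := by
    rw [← LinearMap.ker_eq_bot, LinearMap.ker_coprod_of_disjoint_range _ _
      (by simpa using h)]
    simp
  have hrange : LinearMap.range (p.subtype.coprod q.subtype) = p ⊔ q := by
    simp [LinearMap.range_coprod]
  exact .of_equiv ((LinearEquiv.ofInjective _ hinj).trans (LinearEquiv.ofEq _ _ hrange))

end ModuleLemmas

section ProjectiveSummands

variable {R : Type} [Ring R] {M N : Type} [AddCommGroup M] [Module R M]
  [AddCommGroup N] [Module R N]

theorem QRep.NoProjSummand.of_linearEquiv (e : M ≃ₗ[R] N) (h : QRep.NoProjSummand R N) :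
    QRep.NoProjSummand R M :=
  fun P C _ _ _ _ hP ⟨f⟩ => h P C hP ⟨e.symm.trans f⟩

theorem Submodule.exists_disjoint_sup_eq_of_linearEquiv_prod {W : Submodule R M} {P C : Type}
    [AddCommGroup P] [Module R P] [AddCommGroup C] [Module R C] (e : W ≃ₗ[R] P × C) :
    ∃ B D : Submodule R M, Disjoint B D ∧ B ⊔ D = W ∧ Nonempty (P ≃ₗ[R] B) := by
  set f := W.subtype ∘ₗ e.symm.toLinearMap
  have hf : Function.Injective f := W.injective_subtype.comp e.symm.injective
  refine ⟨range (f ∘ₗ inl R P C), range (f ∘ₗ inr R P C), ?_, ?_,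
    ⟨LinearEquiv.ofInjective _ (hf.comp LinearMap.inl_injective)⟩⟩
  · rw [LinearMap.range_comp, LinearMap.range_comp]
    exact Submodule.disjoint_map hf LinearMap.isCompl_range_inl_inr.disjoint
  · rw [← LinearMap.range_coprod, ← LinearMap.comp_coprod, LinearMap.coprod_inl_inr,
      LinearMap.comp_id, LinearMap.range_comp, LinearEquiv.range, Submodule.map_top,
      Submodule.range_subtype]

theorem Submodule.exists_projective_noProjSummand_decomposition [IsArtinian R M]
    (W : Submodule R M) :
    ∃ B D : Submodule R M, Disjoint B D ∧ B ⊔ D = W ∧ Module.Projective R B ∧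
      QRep.NoProjSummand R D := by
  induction W using WellFoundedLT.induction with
  | _ W IH =>
  by_cases hW : QRep.NoProjSummand R W
  · exact ⟨⊥, W, disjoint_bot_left, bot_sup_eq W, inferInstance, hW⟩
  simp only [QRep.NoProjSummand, not_forall] at hW
  obtain ⟨P, C, _, _, _, _, hP, ⟨e⟩, hPnt⟩ := hW
  obtain ⟨B, D, hBD, hsup, ⟨eB⟩⟩ := exists_disjoint_sup_eq_of_linearEquiv_prod e
  have hB : B ≠ ⊥ := by
    rintro rfl
    exact hPnt eB.toEquiv.subsingleton
  have hDW : D < W := by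
    refine lt_of_le_of_ne (hsup ▸ le_sup_right) fun hDW => hB ?_
    exact hBD.eq_bot_of_le (hDW ▸ hsup ▸ le_sup_left)
  obtain ⟨B₂, D₂, hBD₂, hsup₂, hB₂, hD₂⟩ := IH D hDW
  have : Module.Projective R B := .of_equiv eB
  refine ⟨B ⊔ B₂, D₂, hBD₂.disjoint_sup_left_of_disjoint_sup_right (hsup₂ ▸ hBD),
    by rw [sup_assoc, hsup₂, hsup], ?_, hD₂⟩
  exact projective_sup_of_disjoint (hBD.mono_right (hsup₂ ▸ le_sup_left))

def Submodule.IsProjectiveComplement (U B : Submodule R M) : Prop :=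
  Module.Projective R B ∧ Disjoint U B ∧
    ∃ D : Submodule R M, IsCompl (U ⊔ B) D ∧ QRep.NoProjSummand R D

theorem Submodule.exists_isProjectiveComplement [IsArtinian R M] {U W : Submodule R M}
    (hUW : IsCompl U W) : ∃ B, U.IsProjectiveComplement B := by
  obtain ⟨B, D, hBD, hsup, hB, hD⟩ := exists_projective_noProjSummand_decomposition W
  exact ⟨B, hB, hUW.disjoint.mono_right (hsup ▸ le_sup_left), D,
    hBD.isCompl_sup_left_of_isCompl_sup_right (hsup ▸ hUW), hD⟩

end ProjectiveSummands

namespace Quiver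

variable {V : Type*} [Quiver V]

def StrictlyReachable (a b : V) : Prop := a ≠ b ∧ Reachable a b

theorem strictlyReachable_of_cons (hacyc : ∀ (i : V) (p : Path i i), p = Path.nil)
    {m j n : V} (p : Path m j) (β : j ⟶ n) : StrictlyReachable m n :=
  ⟨by rintro rfl; exact Path.cons_ne_nil p β (hacyc m _), ⟨p.cons β⟩⟩

theorem eq_of_reachable_of_reachable (hacyc : ∀ (i : V) (p : Path i i), p = Path.nil)
    {a b : V} (hab : Reachable a b) (hba : Reachable b a) : a = b := by
  obtain ⟨p⟩ := hab
  obtain ⟨q⟩ := hba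
  have := congrArg Path.length (hacyc a (p.comp q))
  rw [Path.length_comp, Path.length_nil] at this
  exact p.eq_of_length_zero (by omega)

theorem wellFounded_strictlyReachable [Finite V]
    (hacyc : ∀ (i : V) (p : Path i i), p = Path.nil) :
    WellFounded (StrictlyReachable (V := V)) := by
  have : IsTrans V StrictlyReachable := ⟨fun a b c hab hbc =>
    ⟨fun hac => hab.1 (eq_of_reachable_of_reachable hacyc hab.2 (hac ▸ hbc.2)),
      hab.2.trans hbc.2⟩⟩
  have : Std.Irrefl (StrictlyReachable (V := V)) := ⟨fun _ h => h.1 rfl⟩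
  exact Finite.wellFounded_of_trans_of_irrefl _

theorem finite_sigma_path [Finite V] [∀ i j : V, Finite (i ⟶ j)]
    (hacyc : ∀ (i : V) (p : Path i i), p = Path.nil) (n : V) : Finite (Σ m, Path m n) := by
  induction n using (wellFounded_strictlyReachable hacyc).induction with
  | _ n IH =>
  have : ∀ t : Σ j, j ⟶ n, Finite (Σ m, Path m t.1) :=
    fun t => IH _ (strictlyReachable_of_cons hacyc .nil t.2)
  refine Finite.of_injective (β := Option (Σ t : Σ j, j ⟶ n, Σ m, Path m t.1)) (fun
    | ⟨_, .nil⟩ => none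
    | ⟨m, .cons q β⟩ => some ⟨⟨_, β⟩, ⟨m, q⟩⟩) ?_
  rintro ⟨m, _ | ⟨q, β⟩⟩ ⟨m', _ | ⟨q', β'⟩⟩ h
  all_goals simp only [reduceCtorEq, Option.some.injEq, Sigma.mk.injEq] at h ⊢
  obtain ⟨⟨rfl, hβ⟩, hq⟩ := h
  cases eq_of_heq hβ
  cases eq_of_heq hq
  exact ⟨rfl, HEq.rfl⟩

end Quiver

abbrev QuiverRep (Λ : Type) [Ring Λ] (V : Type) [Quiver.{0} V] : Type 1 :=
  QRep Λ fun i j : V => i ⟶ j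

namespace QRep

open scoped Classical

open DirectSum Quiver

variable {Λ : Type} [Ring Λ] {V : Type}

section Arrows

variable {E : V → V → Type}

theorem uMap_lof (X : QRep Λ E) (i : V) (a : Σ j, E j i) (x : X.obj a.1) :
    X.uMap i (DirectSum.lof Λ _ (fun a => X.obj a.1) a x) = X.map a.2 x :=
  DirectSum.toModule_lof Λ _ _

theorem uMap_comp_lmap {X Y : QRep Λ E} (f : Hom X Y) (i : V) :
    Y.uMap i ∘ₗ DirectSum.lmap (fun a : Σ j, E j i => f.app a.1) = f.app i ∘ₗ X.uMap i := by
  refine DirectSum.linearMap_ext Λ fun a => LinearMap.ext fun x => ?_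
  simpa [uMap_lof] using LinearMap.congr_fun (f.comm a.2) x

theorem Hom.range_le_comap_range {X Y : QRep Λ E} (f : Hom X Y) {i j : V} (a : E i j) :
    range (f.app i) ≤ (range (f.app j)).comap (Y.map a) := by
  rintro _ ⟨x, rfl⟩
  exact ⟨X.map a x, (LinearMap.congr_fun (f.comm a) x).symm⟩

noncomputable def Hom.coker {X Y : QRep Λ E} (f : Hom X Y) : QRep Λ E where
  obj i := Y.obj i ⧸ range (f.app i)
  map a := Submodule.mapQ _ _ (Y.map a) (f.range_le_comap_range a)

noncomputable def Hom.toCoker {X Y : QRep Λ E} (f : Hom X Y) : Hom Y f.coker where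
  app i := (range (f.app i)).mkQ
  comm a := Submodule.mapQ_mkQ _ _ _ (h := f.range_le_comap_range a)

end Arrows

section Paths

variable [Quiver.{0} V]

noncomputable def pathMap (X : QuiverRep Λ V) {m : V} :
    ∀ {i : V}, Quiver.Path m i → (X.obj m →ₗ[Λ] X.obj i)
  | _, .nil => LinearMap.id
  | _, .cons p β => X.map β ∘ₗ pathMap X p

@[simp] theorem pathMap_nil (X : QuiverRep Λ V) (m : V) :
    pathMap X (.nil : Quiver.Path m m) = LinearMap.id := rfl

@[simp] theorem pathMap_cons (X : QuiverRep Λ V) {m j i : V} (p : Quiver.Path m j)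
    (β : j ⟶ i) :
    pathMap X (p.cons β) = X.map β ∘ₗ pathMap X p := rfl

theorem Hom.app_pathMap {X Y : QuiverRep Λ V} (f : Hom X Y) {m i : V} (p : Quiver.Path m i)
    (x : X.obj m) : f.app i (pathMap X p x) = pathMap Y p (f.app m x) := by
  induction p with
  | nil => rfl
  | cons q β ih => simpa [ih] using (LinearMap.congr_fun (f.comm β) (pathMap X q x)).symm

end Paths

section FreeRep

variable [Quiver.{0} V] (Λ) (A : V → Type) [∀ n, AddCommGroup (A n)] [∀ n, Module Λ (A n)]

/-- `⊕ₙ Pₙ(Aₙ)`, reducible so that `simp` sees its branches as direct sums. -/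
noncomputable abbrev freeRep : QuiverRep Λ V where
  obj i := ⨁ σ : Σ m, Quiver.Path m i, A σ.1
  map {_ j} β := toModule Λ _ _ fun σ =>
    lof Λ _ (fun σ : Σ m, Quiver.Path m j => A σ.1) ⟨σ.1, σ.2.cons β⟩

variable {Λ}

noncomputable abbrev freeGen {i : V} (σ : Σ m, Quiver.Path m i) :
    A σ.1 →ₗ[Λ] (freeRep Λ A).obj i :=
  lof Λ _ (fun σ : Σ m, Quiver.Path m i => A σ.1) σ

variable {A}

theorem freeRep_map_freeGen {i j : V} (β : i ⟶ j) {m : V} (p : Quiver.Path m i) (x : A m) :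
    (freeRep Λ A).map β (freeGen A ⟨m, p⟩ x) = freeGen A ⟨m, p.cons β⟩ x :=
  toModule_lof (N := (freeRep Λ A).obj j) Λ _ _

noncomputable def freeLift (X : QuiverRep Λ V) (χ : ∀ n, A n →ₗ[Λ] X.obj n) :
    Hom (freeRep Λ A) X where
  app i := toModule Λ _ _ fun σ => pathMap X σ.2 ∘ₗ χ σ.1
  comm {i j} β := by
    refine linearMap_ext Λ fun ⟨m, p⟩ => LinearMap.ext fun x => ?_
    simp

theorem freeLift_app_freeGen (X : QuiverRep Λ V) (χ : ∀ n, A n →ₗ[Λ] X.obj n) {i m : V}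
    (p : Quiver.Path m i) (x : A m) :
    (freeLift X χ).app i (freeGen A ⟨m, p⟩ x) = pathMap X p (χ m x) :=
  toModule_lof Λ _ _

theorem Hom.app_freeGen {X : QuiverRep Λ V} (u : Hom (freeRep Λ A) X) {m i : V}
    (p : Quiver.Path m i) (x : A m) :
    u.app i (freeGen A ⟨m, p⟩ x) = pathMap X p (u.app m (freeGen A ⟨m, .nil⟩ x)) := by
  induction p with
  | nil => rfl
  | cons q β ih =>
    rw [← freeRep_map_freeGen, pathMap_cons, LinearMap.comp_apply, ← ih]
    exact (LinearMap.congr_fun (u.comm β) _).symm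

theorem freeRep_projective (hA : ∀ n, Module.Projective Λ (A n)) :
    Projective (freeRep Λ A) := by
  intro X Y g hg f
  choose χ hχ using fun n => Module.projective_lifting_property (g.app n)
    (f.app n ∘ₗ freeGen A ⟨n, .nil⟩) (hg n)
  refine ⟨freeLift X χ, Hom.ext (funext fun i => linearMap_ext Λ fun ⟨m, p⟩ =>
    LinearMap.ext fun x => ?_)⟩
  change g.app i ((freeLift X χ).app i (freeGen A ⟨m, p⟩ x)) = f.app i (freeGen A ⟨m, p⟩ x)
  rw [freeLift_app_freeGen, g.app_pathMap, f.app_freeGen, ← LinearMap.comp_apply (g.app m), hχ]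
  rfl

variable (A) in
noncomputable def freeRepSplit (n : V) : ∀ σ : Σ m, Quiver.Path m n,
    A σ.1 →ₗ[Λ] A n × ⨁ t : Σ j, j ⟶ n, (freeRep Λ A).obj t.1
  | ⟨_, .nil⟩ => LinearMap.inl Λ _ _
  | ⟨m, .cons (b := j) q β⟩ => LinearMap.inr Λ _ _ ∘ₗ
      lof Λ _ (fun t : Σ j, j ⟶ n => (freeRep Λ A).obj t.1) ⟨j, β⟩ ∘ₗ freeGen A ⟨m, q⟩

variable (A) in
noncomputable def freeRepDecomp (n : V) :
    (A n × ⨁ t : Σ j, j ⟶ n, (freeRep Λ A).obj t.1) ≃ₗ[Λ] (freeRep Λ A).obj n :=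
  LinearEquiv.ofLinearMap ((freeGen A ⟨n, .nil⟩).coprod ((freeRep Λ A).uMap n))
    (toModule Λ _ _ (freeRepSplit A n))
    (linearMap_ext Λ fun
      | ⟨_, .nil⟩ => LinearMap.ext fun x => by simp [freeRepSplit]
      | ⟨_, .cons q β⟩ => LinearMap.ext fun x => by simp [freeRepSplit, uMap_lof (freeRep Λ A)])
    (LinearMap.prod_ext (LinearMap.ext fun x => by
        simp [freeRepSplit])
      (linearMap_ext Λ fun t => linearMap_ext Λ fun σ => LinearMap.ext fun x => by
        simp [freeRepSplit, uMap_lof (freeRep Λ A)]))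

theorem freeRep_separatedMonic : SeparatedMonic (freeRep Λ A) := fun n => by
  rw [← LinearMap.coprod_inr (freeGen A ⟨n, .nil⟩) ((freeRep Λ A).uMap n)]
  exact (freeRepDecomp A n).injective.comp LinearMap.inr_injective

theorem Hom.comp_freeRepDecomp {X : QuiverRep Λ V} (u : Hom (freeRep Λ A) X) (n : V) :
    u.app n ∘ₗ (freeRepDecomp A n).toLinearMap =
      (u.app n ∘ₗ freeGen A ⟨n, .nil⟩).coprod
        (X.uMap n ∘ₗ lmap fun t : Σ j, j ⟶ n => u.app t.1) := by
  rw [uMap_comp_lmap]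
  exact LinearMap.comp_coprod _ _ _

theorem Hom.injective_app_of_freeRep {X : QuiverRep Λ V} (u : Hom (freeRep Λ A) X) (n : V)
    (hgen : Function.Injective (u.app n ∘ₗ freeGen A ⟨n, .nil⟩))
    (hin : Function.Injective (X.uMap n ∘ₗ lmap fun t : Σ j, j ⟶ n => u.app t.1))
    (hdisj : Disjoint (range (u.app n ∘ₗ freeGen A ⟨n, .nil⟩))
      (range (X.uMap n ∘ₗ lmap fun t : Σ j, j ⟶ n => u.app t.1))) :
    Function.Injective (u.app n) := by
  have h : Function.Injective (u.app n ∘ₗ (freeRepDecomp A n).toLinearMap) := by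
    rw [u.comp_freeRepDecomp, ← LinearMap.ker_eq_bot,
      LinearMap.ker_coprod_of_disjoint_range _ _ hdisj, LinearMap.ker_eq_bot.mpr hgen,
      LinearMap.ker_eq_bot.mpr hin, Submodule.prod_bot]
  simpa using h

end FreeRep

section Span

variable [Quiver.{0} V] (M : QuiverRep Λ V) (B : ∀ n : V, Submodule Λ (M.obj n))

noncomputable def pathSpan (n : V) : Submodule Λ (M.obj n) :=
  ⨆ σ : Σ m, Quiver.Path m n, (B σ.1).map (pathMap M σ.2)

noncomputable def incomingSpan (n : V) : Submodule Λ (M.obj n) :=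
  ⨆ t : Σ j, j ⟶ n, (pathSpan M B t.1).map (M.map t.2)

theorem pathSpan_eq_incomingSpan_sup (n : V) :
    pathSpan M B n = incomingSpan M B n ⊔ B n := by
  refine le_antisymm (iSup_le fun ⟨m, p⟩ => ?_) (sup_le (iSup_le fun ⟨j, β⟩ => ?_) ?_)
  · cases p with
    | nil => simp
    | cons q β =>
      rw [pathMap_cons, Submodule.map_comp]
      exact le_sup_of_le_left (le_iSup_of_le ⟨_, β⟩ (Submodule.map_mono
        (le_iSup_of_le (ι := Σ m, Quiver.Path m _) ⟨m, q⟩ le_rfl)))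
  · rw [pathSpan, Submodule.map_iSup]
    exact iSup_le fun ⟨m, q⟩ => le_iSup_of_le (ι := Σ m, Quiver.Path m n) ⟨m, q.cons β⟩
      (by rw [pathMap_cons, Submodule.map_comp])
  · exact le_iSup_of_le (ι := Σ m, Quiver.Path m n) ⟨n, .nil⟩ (by simp)

theorem incomingSpan_congr (hacyc : ∀ (i : V) (p : Quiver.Path i i), p = Quiver.Path.nil)
    {B B' : ∀ n, Submodule Λ (M.obj n)} {n : V}
    (h : ∀ m, StrictlyReachable m n → B m = B' m) : incomingSpan M B n = incomingSpan M B' n :=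
  iSup_congr fun ⟨_, β⟩ => congrArg _ <| iSup_congr fun ⟨m, q⟩ => by
    rw [h m (strictlyReachable_of_cons hacyc q β)]

noncomputable def spanHom : Hom (freeRep Λ fun m : V => ↥(B m)) M :=
  freeLift M fun m => (B m).subtype

theorem range_spanHom_app (n : V) : range ((spanHom M B).app n) = pathSpan M B n := by
  simp only [spanHom, freeLift, DirectSum.range_toModule, LinearMap.range_comp,
    Submodule.range_subtype]
  rfl

theorem range_uMap_comp_lmap_spanHom (n : V) :
    range (M.uMap n ∘ₗ lmap fun t : Σ j, j ⟶ n => (spanHom M B).app t.1) =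
      incomingSpan M B n := by
  have : M.uMap n ∘ₗ lmap (fun t : Σ j, j ⟶ n => (spanHom M B).app t.1) =
      toModule Λ _ _ fun t => M.map t.2 ∘ₗ (spanHom M B).app t.1 :=
    linearMap_ext Λ fun t => LinearMap.ext fun x => by simp [uMap_lof]
  rw [this, DirectSum.range_toModule]
  exact iSup_congr fun t => by rw [LinearMap.range_comp, range_spanHom_app]

theorem injective_spanHom_app {n : V}
    (hin : Function.Injective (M.uMap n ∘ₗ lmap fun t : Σ j, j ⟶ n => (spanHom M B).app t.1))
    (hdisj : Disjoint (incomingSpan M B n) (B n)) : Function.Injective ((spanHom M B).app n) := by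
  have hgen : (spanHom M B).app n ∘ₗ freeGen _ ⟨n, .nil⟩ = (B n).subtype :=
    LinearMap.ext fun x => freeLift_app_freeGen M (fun m => (B m).subtype) .nil x
  refine (spanHom M B).injective_app_of_freeRep n ?_ hin ?_
  · rw [hgen]
    exact (B n).injective_subtype
  · rw [hgen, Submodule.range_subtype, range_uMap_comp_lmap_spanHom]
    exact hdisj.symm

end Span

section Construction

variable [Quiver.{0} V] [Finite V]

/-- `⊥` and `Classical.epsilon` only fill in the recursion: by `branchSummand_eq` only earlier
vertices matter, and by `branchSummand_spec` a projective complement exists. -/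
noncomputable def branchSummand (hacyc : ∀ (i : V) (p : Quiver.Path i i), p = Quiver.Path.nil)
    (M : QuiverRep Λ V) : ∀ n : V, Submodule Λ (M.obj n) :=
  (wellFounded_strictlyReachable hacyc).fix fun n B =>
    Classical.epsilon (incomingSpan M (fun m => if h : StrictlyReachable m n then B m h else ⊥)
      n).IsProjectiveComplement

theorem branchSummand_eq (hacyc : ∀ (i : V) (p : Quiver.Path i i), p = Quiver.Path.nil)
    (M : QuiverRep Λ V) (n : V) :
    branchSummand hacyc M n =
      Classical.epsilon (incomingSpan M (branchSummand hacyc M) n).IsProjectiveComplement := by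
  rw [branchSummand, WellFounded.fix_eq]
  congr 2
  exact incomingSpan_congr M hacyc fun m hm => dif_pos hm

theorem moduleInjective_incomingSpan [IsNoetherianRing Λ] [Module.Injective Λ Λ]
    [∀ i j : V, Finite (i ⟶ j)] (hacyc : ∀ (i : V) (p : Quiver.Path i i), p = Quiver.Path.nil)
    (M : QuiverRep Λ V) (hfin : ∀ i, Module.Finite Λ (M.obj i))
    (B : ∀ n : V, Submodule Λ (M.obj n)) {n : V}
    (hB : ∀ m, StrictlyReachable m n → Module.Projective Λ (B m))
    (hin : Function.Injective (M.uMap n ∘ₗ lmap fun t : Σ j, j ⟶ n => (spanHom M B).app t.1)) :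
    Module.Injective Λ (incomingSpan M B n) := by
  have hBinj (m : V) (hm : StrictlyReachable m n) : Module.Injective Λ (B m) :=
    have := hB m hm
    have := hfin m
    Module.injective_of_finite_of_projective
  have (t : Σ j, j ⟶ n) : Module.Injective Λ ((freeRep Λ fun m : V => ↥(B m)).obj t.1) :=
    have := finite_sigma_path hacyc t.1
    have (σ : Σ m, Quiver.Path m t.1) : Module.Injective Λ (B σ.1) :=
      hBinj σ.1 (strictlyReachable_of_cons hacyc σ.2 t.2)
    Module.Injective.directSum
  have : Module.Injective Λ (⨁ t : Σ j, j ⟶ n, (freeRep Λ fun m : V => ↥(B m)).obj t.1) :=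
    Module.Injective.directSum
  exact .of_linearEquiv ((LinearEquiv.ofInjective _ hin).trans
    (LinearEquiv.ofEq _ _ (range_uMap_comp_lmap_spanHom M B n))).symm

theorem branchSummand_spec [IsArtinianRing Λ] [Module.Injective Λ Λ] [∀ i j : V, Finite (i ⟶ j)]
    (hacyc : ∀ (i : V) (p : Quiver.Path i i), p = Quiver.Path.nil) (M : QuiverRep Λ V)
    (hfin : ∀ i, Module.Finite Λ (M.obj i)) (hM : SeparatedMonic M) (n : V) :
    Function.Injective ((spanHom M (branchSummand hacyc M)).app n) ∧
      (incomingSpan M (branchSummand hacyc M) n).IsProjectiveComplement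
        (branchSummand hacyc M n) := by
  induction n using (wellFounded_strictlyReachable hacyc).induction with
  | _ n IH =>
  have hin : Function.Injective (M.uMap n ∘ₗ
      lmap fun t : Σ j, j ⟶ n => (spanHom M (branchSummand hacyc M)).app t.1) :=
    (hM n).comp <| (lmap_injective _).2 fun t =>
      (IH t.1 (strictlyReachable_of_cons hacyc .nil t.2)).1
  have := moduleInjective_incomingSpan hacyc M hfin _ (fun m hm => (IH m hm).2.1) hin
  obtain ⟨W, hW⟩ := (incomingSpan M (branchSummand hacyc M) n).exists_isCompl_of_injective
  have := hfin n
  have hB : (incomingSpan M (branchSummand hacyc M) n).IsProjectiveComplement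
      (branchSummand hacyc M n) := by
    rw [branchSummand_eq]
    exact Classical.epsilon_spec (Submodule.exists_isProjectiveComplement hW)
  exact ⟨injective_spanHom_app M _ hin hB.2.1, hB⟩

end Construction

end QRep

/-- Every separated monic representation `M` of a finite acyclic
quiver over a selfinjective algebra admits a short exact sequence
`0 → I → M → N → 0` with `I` a projective object of `Gproj ΛQ` and no branch of `N`
having a nonzero projective direct summand. -/
theorem exists_ses_projective_and_no_proj_summand
    (k : Type) [Field k] (Λ : Type) [Ring Λ] [Algebra k Λ] [FiniteDimensional k Λ]
    (hself : Module.Injective Λ Λ)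
    {V : Type} [Fintype V] {E : V → V → Type} [∀ i j, Fintype (E i j)]
    (hacyc : QRep.Acyclic E)
    (M : QRep Λ E) (hfin : ∀ i, Module.Finite Λ (M.obj i))
    (hM : QRep.SeparatedMonic M) :
    ∃ (I N : QRep Λ E) (f : QRep.Hom I M) (g : QRep.Hom M N),
      QRep.Projective I ∧ QRep.SeparatedMonic I ∧
      (∀ i, Function.Injective (f.app i)) ∧
      (∀ i, Function.Surjective (g.app i)) ∧
      (∀ i, LinearMap.range (f.app i) = LinearMap.ker (g.app i)) ∧
      (∀ i, QRep.NoProjSummand Λ (N.obj i)) := by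
  let _ : Quiver.{0} V := ⟨E⟩
  have : ∀ i j : V, Finite (i ⟶ j) := fun i j => inferInstanceAs (Finite (E i j))
  have : IsArtinianRing Λ := .of_finite k Λ
  set B := QRep.branchSummand hacyc M
  have hB := QRep.branchSummand_spec hacyc M hfin hM
  refine ⟨QRep.freeRep Λ fun m => B m, (QRep.spanHom M B).coker, QRep.spanHom M B,
    (QRep.spanHom M B).toCoker, QRep.freeRep_projective fun n => (hB n).2.1,
    QRep.freeRep_separatedMonic, fun i => (hB i).1, fun i => Submodule.mkQ_surjective _,
    fun i => (Submodule.ker_mkQ _).symm, fun i => ?_⟩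
  obtain ⟨-, -, D, hD, hDproj⟩ := (hB i).2
  rw [← QRep.pathSpan_eq_incomingSpan_sup, ← QRep.range_spanHom_app] at hD
  exact hDproj.of_linearEquiv (Submodule.quotientEquivOfIsCompl _ _ hD)
end

section
/- Let Λ be a finite-dimensional selfinjective k-algebra, Q a finite acyclic quiver, and M a separated monic representation of Q over Λ such that M_i is a projective Λ-module for each vertex i ∈ Q_0. Then M is a projective ΛQ-module. -/
open Function LinearMap

open CategoryTheory

section MyAux

variable {Λ : Type} [Ring Λ]

/-- A product of injective modules is injective. -/
theorem MyAux.inj_pi {ι : Type} (Q : ι → Type) [∀ i, AddCommGroup (Q i)] [∀ i, Module Λ (Q i)]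
    (h : ∀ i, Module.Injective Λ (Q i)) : Module.Injective Λ (∀ i, Q i) := by
  refine ⟨fun X Y _ _ _ _ f hf g => ?_⟩
  have hext := fun i => (h i).out f hf ((LinearMap.proj i).comp g)
  exact ⟨LinearMap.pi (fun i => (hext i).choose), fun x => by
    funext i; exact (hext i).choose_spec x⟩

/-- A retract of an injective module is injective. -/
theorem MyAux.inj_of_retract {M N : Type} [AddCommGroup M] [Module Λ M] [AddCommGroup N]
    [Module Λ N] (r : M →ₗ[Λ] N) (s : N →ₗ[Λ] M) (hrs : ∀ x, r (s x) = x)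
    (hM : Module.Injective Λ M) : Module.Injective Λ N := by
  refine ⟨fun X Y _ _ _ _ f hf g => ?_⟩
  obtain ⟨h, hh⟩ := hM.out f hf (s.comp g)
  exact ⟨r.comp h, fun x => by simp [hh x, hrs]⟩

theorem MyAux.inj_of_fg_proj (hself : Module.Injective Λ Λ) (N : Type) [AddCommGroup N]
    [Module Λ N] (hfin : Module.Finite Λ N) (hproj : Module.Projective Λ N) :
    Module.Injective Λ N := by
  obtain ⟨n, f, hf⟩ := Module.Finite.exists_fin' Λ N
  obtain ⟨s, hs⟩ := Module.projective_lifting_property f LinearMap.id hf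
  refine MyAux.inj_of_retract f s (fun x => ?_) (MyAux.inj_pi _ (fun _ => hself))
  exact LinearMap.congr_fun hs x

theorem MyAux.inj_directSum {ι : Type} [Fintype ι] (Q : ι → Type) [∀ i, AddCommGroup (Q i)]
    [∀ i, Module Λ (Q i)] (h : ∀ i, Module.Injective Λ (Q i)) :
    Module.Injective Λ (DirectSum ι Q) := by
  classical
  have e := DirectSum.linearEquivFunOnFintype Λ ι Q
  exact MyAux.inj_of_retract (e.symm : _ →ₗ[Λ] _) (e : _ →ₗ[Λ] _)
    (fun x => e.symm_apply_apply x) (MyAux.inj_pi Q h)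

variable {V : Type} {E : V → V → Type}

theorem MyAux.uMap_lof {V0 : V} [DecidableEq (Σ j : V, E j V0)] (X : QRep Λ E)
    (a : Σ j : V, E j V0) (x : X.obj a.1) :
    X.uMap V0 (DirectSum.lof Λ _ (fun a => X.obj a.1) a x) = X.map a.2 x := by
  classical
  show DirectSum.toModule Λ _ _ (fun a => X.map a.2) (DirectSum.lof Λ _ _ a x) = _
  rw [DirectSum.toModule_lof]

/-- The key extension step at a single vertex. -/
theorem MyAux.step_exists (M X Y : QRep Λ E) (g : QRep.Hom X Y) (f : QRep.Hom M Y)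
    (hM : QRep.SeparatedMonic M) (i : V)
    (hinj : Module.Injective Λ (DirectSum (Σ j : V, E j i) (fun a => M.obj a.1)))
    (hproj : Module.Projective Λ (M.obj i))
    (hg : Function.Surjective (g.app i))
    (G : ∀ j, M.obj j →ₗ[Λ] X.obj j)
    (hG : ∀ j, Nonempty (E j i) → (g.app j).comp (G j) = f.app j) :
    ∃ φ : M.obj i →ₗ[Λ] X.obj i, (g.app i).comp φ = f.app i ∧
      ∀ (j : V) (a : E j i), φ.comp (M.map a) = (X.map a).comp (G j) := by
  classical
  set u := M.uMap i with hu
  obtain ⟨ρ, hρ⟩ := hinj.out u (hM i) LinearMap.id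
  set hh : DirectSum (Σ j : V, E j i) (fun a => M.obj a.1) →ₗ[Λ] X.obj i :=
    DirectSum.toModule Λ _ _ (fun a => (X.map a.2).comp (G a.1)) with hhh
  set q := f.app i - (g.app i).comp (hh.comp ρ) with hq_def
  have hq : ∀ d, q (u d) = 0 := by
    have : ((f.app i).comp u - (g.app i).comp hh) = 0 := by
      apply DirectSum.linearMap_ext
      intro a
      ext x
      have h1 : u (DirectSum.lof Λ _ (fun a => M.obj a.1) a x) = M.map a.2 x :=
        MyAux.uMap_lof M a x
      have h2 : hh (DirectSum.lof Λ _ (fun a => M.obj a.1) a x) = X.map a.2 (G a.1 x) := by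
        rw [hhh]; rw [DirectSum.toModule_lof]; rfl
      simp only [LinearMap.comp_apply, LinearMap.sub_apply, LinearMap.zero_apply,
        LinearMap.coe_comp, Function.comp_apply]
      rw [h1, h2]
      have h3 := LinearMap.congr_fun (g.comm a.2) (G a.1 x)
      have h4 := LinearMap.congr_fun (hG a.1 ⟨a.2⟩) x
      have h5 := LinearMap.congr_fun (f.comm a.2) x
      simp only [LinearMap.comp_apply] at h3 h4 h5
      rw [← h3, h4, h5]
      exact sub_self _
    intro d
    have hd := LinearMap.congr_fun this d
    simp only [LinearMap.sub_apply, LinearMap.comp_apply, LinearMap.zero_apply,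
      sub_eq_zero] at hd
    simp only [hq_def, LinearMap.sub_apply, LinearMap.comp_apply]
    rw [hρ d, hd]
    exact sub_self _
  obtain ⟨s₀, hs₀⟩ := Module.projective_lifting_property (g.app i) q hg
  refine ⟨hh.comp ρ + s₀.comp (LinearMap.id - u.comp ρ), ?_, ?_⟩
  · ext x
    have h1 := LinearMap.congr_fun hs₀ x
    have h2 := LinearMap.congr_fun hs₀ (u (ρ x))
    simp only [LinearMap.comp_apply, LinearMap.add_apply, LinearMap.sub_apply,
      LinearMap.id_apply, map_sub, map_add] at h1 h2 ⊢
    rw [h1, h2, hq (ρ x)]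
    simp [hq_def]
  · intro j a
    ext x
    have hlof : M.map a x = u (DirectSum.lof Λ ((j' : V) × E j' i)
        (fun b => M.obj b.1) (⟨j, a⟩ : Σ j' : V, E j' i) x) :=
      (MyAux.uMap_lof M (⟨j, a⟩ : Σ j' : V, E j' i) x).symm
    have h2 : hh (DirectSum.lof Λ _ (fun b => M.obj b.1) (⟨j, a⟩ : Σ j : V, E j i) x)
        = X.map a (G j x) := by rw [hhh]; rw [DirectSum.toModule_lof]; rfl
    simp only [LinearMap.comp_apply, LinearMap.add_apply, LinearMap.sub_apply,
      LinearMap.id_apply, map_sub]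
    rw [hlof, hρ]
    simp only [LinearMap.id_apply, sub_self, add_zero]
    exact h2

/-- A nontrivial path out of a transitive chain of arrows. -/
theorem MyAux.exists_pos_path {j i : V}
    (h : Relation.TransGen (fun a b : V => Nonempty (E a b)) j i) :
    ∃ p : @Quiver.Path V ⟨E⟩ j i, @Quiver.Path.length V ⟨E⟩ j i p ≠ 0 := by
  induction h with
  | single ha =>
      obtain ⟨a⟩ := ha
      exact ⟨@Quiver.Path.cons V ⟨E⟩ _ _ _ (@Quiver.Path.nil V ⟨E⟩ _) a, Nat.succ_ne_zero _⟩
  | tail _ ha ih =>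
      obtain ⟨a⟩ := ha
      obtain ⟨p, _⟩ := ih
      exact ⟨@Quiver.Path.cons V ⟨E⟩ _ _ _ p a, Nat.succ_ne_zero _⟩

theorem MyAux.wf_arrows [Finite V] (hacyc : QRep.Acyclic E) :
    WellFounded (fun j i : V => Nonempty (E j i)) := by
  have hirr : IsIrrefl V (Relation.TransGen (fun a b : V => Nonempty (E a b))) := by
    refine ⟨fun i hi => ?_⟩
    obtain ⟨p, hp⟩ := MyAux.exists_pos_path hi
    exact hp (by rw [hacyc i p]; rfl)
  have htr : IsTrans V (Relation.TransGen (fun a b : V => Nonempty (E a b))) :=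
    ⟨fun _ _ _ => Relation.TransGen.trans⟩
  have := Finite.wellFounded_of_trans_of_irrefl
    (Relation.TransGen (fun a b : V => Nonempty (E a b)))
  exact Subrelation.wf (fun h => Relation.TransGen.single h) this

section Lift

variable (M X Y : QRep Λ E) (g : QRep.Hom X Y) (f : QRep.Hom M Y)

open Classical in
/-- The family of maps available at vertex `i`, extended by zero. -/
noncomputable def MyAux.liftG (i : V) (IH : ∀ j, Nonempty (E j i) → (M.obj j →ₗ[Λ] X.obj j)) :
    ∀ j, M.obj j →ₗ[Λ] X.obj j :=
  fun j => if h : Nonempty (E j i) then IH j h else 0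

theorem MyAux.liftG_pos (i : V) (IH : ∀ j, Nonempty (E j i) → (M.obj j →ₗ[Λ] X.obj j))
    (j : V) (h : Nonempty (E j i)) : MyAux.liftG M X i IH j = IH j h := by
  classical
  exact dif_pos h

variable (hstep : ∀ (i : V) (G : ∀ j, M.obj j →ₗ[Λ] X.obj j),
    (∀ j, Nonempty (E j i) → (g.app j).comp (G j) = f.app j) →
    ∃ φ : M.obj i →ₗ[Λ] X.obj i, (g.app i).comp φ = f.app i ∧
      ∀ (j : V) (a : E j i), φ.comp (M.map a) = (X.map a).comp (G j))

/-- One step of the recursive construction of the lift. -/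
noncomputable def MyAux.liftBody (i : V)
    (IH : ∀ j, Nonempty (E j i) →
      {φ : M.obj j →ₗ[Λ] X.obj j // (g.app j).comp φ = f.app j}) :
    {φ : M.obj i →ₗ[Λ] X.obj i // (g.app i).comp φ = f.app i} :=
  ⟨(hstep i (MyAux.liftG M X i (fun j h => (IH j h).1))
      (fun j hj => by rw [MyAux.liftG_pos M X i _ j hj]; exact (IH j hj).2)).choose,
   (hstep i (MyAux.liftG M X i (fun j h => (IH j h).1))
      (fun j hj => by rw [MyAux.liftG_pos M X i _ j hj]; exact (IH j hj).2)).choose_spec.1⟩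

variable (wf : WellFounded (fun j i : V => Nonempty (E j i)))

/-- The lift, by well-founded recursion over the arrow relation. -/
noncomputable def MyAux.liftFun :
    ∀ i, {φ : M.obj i →ₗ[Λ] X.obj i // (g.app i).comp φ = f.app i} :=
  wf.fix (MyAux.liftBody M X Y g f hstep)

theorem MyAux.liftFun_comm (i j : V) (a : E j i) :
    (MyAux.liftFun M X Y g f hstep wf i).1.comp (M.map a)
      = (X.map a).comp (MyAux.liftFun M X Y g f hstep wf j).1 := by
  have hfix := wf.fix_eq (MyAux.liftBody M X Y g f hstep) i
  rw [show MyAux.liftFun M X Y g f hstep wf i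
      = MyAux.liftBody M X Y g f hstep i (fun j _ => MyAux.liftFun M X Y g f hstep wf j)
    from hfix]
  have spec := (hstep i (MyAux.liftG M X i
      (fun j _ => (MyAux.liftFun M X Y g f hstep wf j).1)) (fun j hj => by
        rw [MyAux.liftG_pos M X i _ j hj]
        exact (MyAux.liftFun M X Y g f hstep wf j).2)).choose_spec.2 j a
  rw [MyAux.liftG_pos M X i _ j ⟨a⟩] at spec
  exact spec

end Lift

end MyAux

/-- A separated monic representation of a finite acyclic quiver
over a selfinjective algebra, all of whose branches are projective `Λ`-modules,
is a projective representation. -/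
theorem separatedMonic_with_projective_branches_is_projective
    (k : Type) [Field k] (Λ : Type) [Ring Λ] [Algebra k Λ] [FiniteDimensional k Λ]
    (hself : Module.Injective Λ Λ)
    {V : Type} [Fintype V] {E : V → V → Type} [∀ i j, Fintype (E i j)]
    (hacyc : QRep.Acyclic E)
    (M : QRep Λ E) (hfin : ∀ i, Module.Finite Λ (M.obj i))
    (hM : QRep.SeparatedMonic M)
    (hproj : ∀ i, Module.Projective Λ (M.obj i)) :
    QRep.Projective M := by
  classical
  intro X Y g hg f
  have wf : WellFounded (fun j i : V => Nonempty (E j i)) := MyAux.wf_arrows hacyc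
  have hstep : ∀ (i : V) (G : ∀ j, M.obj j →ₗ[Λ] X.obj j),
      (∀ j, Nonempty (E j i) → (g.app j).comp (G j) = f.app j) →
      ∃ φ : M.obj i →ₗ[Λ] X.obj i, (g.app i).comp φ = f.app i ∧
        ∀ (j : V) (a : E j i), φ.comp (M.map a) = (X.map a).comp (G j) := by
    intro i G hG
    refine MyAux.step_exists M X Y g f hM i ?_ (hproj i) (hg i) G hG
    exact MyAux.inj_directSum _ (fun a => MyAux.inj_of_fg_proj hself _ (hfin a.1) (hproj a.1))
  refine ⟨⟨fun i => (MyAux.liftFun M X Y g f hstep wf i).1, ?_⟩, ?_⟩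
  · intro i j a
    exact (MyAux.liftFun_comm M X Y g f hstep wf j i a).symm
  · apply QRep.Hom.ext
    funext i
    exact (MyAux.liftFun M X Y g f hstep wf i).2
end

section
/- Let Λ be a finite-dimensional selfinjective algebra, Q a finite acyclic quiver, M a ΛQ-module, and α : v → w an arrow of Q. Then the ΛQ-module N = Mono_α(M), constructed as the middle term of a componentwise split short exact sequence 0 → P_w(E(M_v)) → N → M → 0 using an injective envelope e : M_v → E(M_v), satisfies: N_α is a monomorphism and the sum Im N_α + Σ_{t(β)=w, β≠α} Im N_β is a direct sum. -/
open Function LinearMap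

open CategoryTheory

/-!
The second component of `Mono_α(M)_w` is `P_w(J)_w`, with one copy of `J` per path `w → w`.
Read off its coordinates at the trivial path and at the paths ending with `α`: on
`N_α (x, y)` they return `(e x, y)`, since the trivial path is hit only by `e` and the paths
ending with `α` only by `P_w(J)_α`, while for every other arrow `β` into `w` they vanish on the
image of `N_β`. Injectivity of `e` therefore makes `N_α` injective and its image disjoint from
the kernel of these coordinates, which contains all the other images.
-/

theorem LinearMap.injective_and_disjoint_range_ker_of_injective_comp {R M N P : Type*}
    [Ring R] [AddCommGroup M] [Module R M] [AddCommGroup N] [Module R N] [AddCommGroup P]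
    [Module R P] {f : M →ₗ[R] N} {g : N →ₗ[R] P} (h : Injective (g ∘ₗ f)) :
    Injective f ∧ Disjoint (range f) (ker g) := by
  refine ⟨(coe_comp g f ▸ h).of_comp, disjoint_ker.2 ?_⟩
  rintro _ ⟨x, rfl⟩ hx
  rw [h (hx.trans (map_zero (g ∘ₗ f)).symm), map_zero]

theorem And.rec_eq_apply {p q : Prop} {α : Sort*} (f : p → q → α) (h : p ∧ q) :
    And.rec f h = f h.1 h.2 := by
  cases h; rfl

namespace Finsupp

variable {α β M : Type*} [AddCommMonoid M] {f : α → β} {b : β}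

theorem mapDomain_add_single_apply_self (hb : b ∉ Set.range f) (y : α →₀ M) (c : M) :
    (mapDomain f y + single b c) b = c := by
  rw [add_apply, mapDomain_of_notMem_range _ _ hb, single_eq_same, zero_add]

theorem mapDomain_add_single_apply_of_injective (hf : Injective f) (hb : b ∉ Set.range f)
    (y : α →₀ M) (c : M) (a : α) : (mapDomain f y + single b c) (f a) = y a := by
  rw [add_apply, mapDomain_apply hf, single_eq_of_ne fun h => hb ⟨a, h⟩, add_zero]

end Finsupp

namespace Quiver.Path

variable {U : Type*} [Quiver U] {a b b' c : U}

theorem cons_left_injective (f : b ⟶ c) : Injective fun p : Path a b => p.cons f :=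
  fun _ _ h => eq_of_heq (heq_of_cons_eq_cons h)

theorem nil_notMem_range_cons (f : b ⟶ a) :
    (nil : Path a a) ∉ Set.range fun p : Path a b => p.cons f :=
  fun ⟨p, hp⟩ => cons_ne_nil p f hp

theorem sigma_eq_of_cons_eq_cons {p : Path a b} {p' : Path a b'} {f : b ⟶ c} {f' : b' ⟶ c}
    (h : p.cons f = p'.cons f') : (⟨b, f⟩ : Σ x, x ⟶ c) = ⟨b', f'⟩ := by
  obtain rfl := obj_eq_of_cons_eq_cons h
  rw [eq_of_heq (hom_heq_of_cons_eq_cons h)]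

end Quiver.Path

namespace QRep

variable {Λ : Type} [Ring Λ] {V : Type} {E : V → V → Type}
  (M : QRep Λ E) {v w : V} (α : E v w) {J : Type} [AddCommGroup J] [Module Λ J]
  (e : M.obj v →ₗ[Λ] J)

-- `EMap` destructures a proof of `Sigma.mk` injectivity, and `And.rec` on a proof
-- does not reduce by `rfl`.
theorem eMap_self :
    EMap M α e α = (Finsupp.lsingle (@Quiver.Path.nil V ⟨E⟩ w)).comp e := by
  simp only [EMap, dif_pos, And.rec_eq_apply]
  exact And.rec_eq_apply _ _

theorem eMap_of_ne {i j : V} (β : E i j)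
    (h : (⟨i, ⟨j, β⟩⟩ : Σ a : V, Σ b : V, E a b) ≠ ⟨v, ⟨w, α⟩⟩) : EMap M α e β = 0 :=
  dif_neg h

theorem monoA_map_apply {i j : V} (β : E i j) (x : M.obj i) (y : Path E w i →₀ J) :
    (MonoA M α e).map β (x, y) =
      (M.map β x, (Finsupp.mapDomain (fun p => @Quiver.Path.cons V ⟨E⟩ w i j p β) y :
        Path E w j →₀ J) + EMap M α e β x) :=
  rfl

variable (Λ) in
noncomputable def nilConsCoords : (Path E w w →₀ J) →ₗ[Λ] J × (Path E w v → J) :=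
  (Finsupp.lapply (@Quiver.Path.nil V ⟨E⟩ w)).prod
    (LinearMap.pi fun p => Finsupp.lapply (@Quiver.Path.cons V ⟨E⟩ w v w p α))

theorem nilConsCoords_monoA_map_self (z : (MonoA M α e).obj v) :
    nilConsCoords Λ α ((MonoA M α e).map α z).2 = (e z.1, ⇑z.2) := by
  obtain ⟨x, y⟩ := z
  rw [monoA_map_apply, eMap_self]
  have hnil := @Quiver.Path.nil_notMem_range_cons V ⟨E⟩ w v α
  exact Prod.ext (Finsupp.mapDomain_add_single_apply_self hnil y (e x)) <| funext <|
    Finsupp.mapDomain_add_single_apply_of_injective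
      (@Quiver.Path.cons_left_injective V ⟨E⟩ w v w α) hnil y (e x)

theorem nilConsCoords_monoA_map_of_ne {j : V} (β : E j w)
    (hβ : (⟨j, β⟩ : Σ j : V, E j w) ≠ ⟨v, α⟩) (z : (MonoA M α e).obj j) :
    nilConsCoords Λ α ((MonoA M α e).map β z).2 = 0 := by
  obtain ⟨x, y⟩ := z
  have hne : (⟨j, ⟨w, β⟩⟩ : Σ a b : V, E a b) ≠ ⟨v, ⟨w, α⟩⟩ := by
    rintro ⟨⟩
    exact hβ rfl
  rw [monoA_map_apply, eMap_of_ne M α e β hne, LinearMap.zero_apply, add_zero]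
  exact Prod.ext (Finsupp.mapDomain_of_notMem_range _ _
    (@Quiver.Path.nil_notMem_range_cons V ⟨E⟩ w j β)) <| funext fun p =>
    Finsupp.mapDomain_of_notMem_range _ _ fun ⟨q, hq⟩ =>
      hβ (@Quiver.Path.sigma_eq_of_cons_eq_cons V ⟨E⟩ w j v w q p β α hq)

theorem injective_nilConsCoords_comp_monoA_map_self (he : Injective e) :
    Injective ((nilConsCoords Λ α ∘ₗ LinearMap.snd Λ _ _) ∘ₗ (MonoA M α e).map α) := by
  intro z z' h
  obtain ⟨h₁, h₂⟩ := Prod.ext_iff.1 <| (nilConsCoords_monoA_map_self M α e z).symm.trans <|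
    h.trans (nilConsCoords_monoA_map_self M α e z')
  exact Prod.ext (he h₁) (DFunLike.coe_injective h₂)

end QRep

theorem monoA_map_injective_and_disjoint_general
    (Λ : Type) [Ring Λ]
    {V : Type} {E : V → V → Type}
    (M : QRep Λ E)
    {v w : V} (α : E v w)
    (J : Type) [AddCommGroup J] [Module Λ J] (e : M.obj v →ₗ[Λ] J)
    (he : QRep.IsInjEnvelope e) :
    Function.Injective ((QRep.MonoA M α e).map α) ∧
    Disjoint (LinearMap.range ((QRep.MonoA M α e).map α))
      (⨆ b : {b : Σ j : V, E j w // b ≠ ⟨v, α⟩},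
        LinearMap.range ((QRep.MonoA M α e).map b.1.2)) := by
  obtain ⟨hinj, hdisj⟩ := injective_and_disjoint_range_ker_of_injective_comp <|
    QRep.injective_nilConsCoords_comp_monoA_map_self M α e he.2.1
  refine ⟨hinj, hdisj.mono_right <| iSup_le fun ⟨⟨j, β⟩, hβ⟩ => ?_⟩
  rintro _ ⟨z, rfl⟩
  exact QRep.nilConsCoords_monoA_map_of_ne M α e β hβ z

/-- For a `ΛQ`-module `M` and an arrow `α : v → w`, the module
`N = Mono_α(M)` (built from an injective envelope `e : M_v → J` as the middle term
of the componentwise split sequence `0 → P_w(J) → N → M → 0`) has `N_α` monic, and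
the image of `N_α` forms a direct sum with the sum of the images of the other
structure maps ending at `w`. -/
theorem monoA_map_injective_and_disjoint
    (k : Type) [Field k] (Λ : Type) [Ring Λ] [Algebra k Λ] [FiniteDimensional k Λ]
    (hself : Module.Injective Λ Λ)
    {V : Type} [Fintype V] {E : V → V → Type} [∀ i j, Fintype (E i j)]
    (hacyc : QRep.Acyclic E)
    (M : QRep Λ E) (hfin : ∀ i, Module.Finite Λ (M.obj i))
    {v w : V} (α : E v w)
    (J : Type) [AddCommGroup J] [Module Λ J] (e : M.obj v →ₗ[Λ] J)
    (he : QRep.IsInjEnvelope e) :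
    Function.Injective ((QRep.MonoA M α e).map α) ∧
    Disjoint (LinearMap.range ((QRep.MonoA M α e).map α))
      (⨆ b : {b : Σ j : V, E j w // b ≠ ⟨v, α⟩},
        LinearMap.range ((QRep.MonoA M α e).map b.1.2)) :=
  monoA_map_injective_and_disjoint_general Λ M α J e he
end

section
/- Let Λ be a finite-dimensional selfinjective algebra, Q a finite acyclic quiver, and α, β arrows of Q such that there is no path from t(α) to s(β) and no path from t(β) to s(α). Then for any ΛQ-module M there is an isomorphism Mono_α(Mono_β(M)) ≅ Mono_β(Mono_α(M)). -/
open Function LinearMap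

open CategoryTheory

/-!
Since there is no path from `t(β)` to `s(α)`, the vertex `s(α)` carries no new summand in
`Mono_β(M)`, so `Mono_β(M)` agrees with `M` at `s(α)` and the envelopes used at `α` on the two
sides are envelopes of the same module, hence isomorphic under it; symmetrically at `β`. Both
iterated constructions are then `M ⊕ P_{t(β)}(J) ⊕ P_{t(α)}(J')` at every vertex, and swapping
the two new summands (twisted by these isomorphisms) commutes with all structure maps, because
each twisting map `EMap` is natural in the envelope.
-/

namespace LinearEquiv

variable {R X A A' B B' : Type*} [Semiring R] [AddCommMonoid X] [Module R X]
  [AddCommMonoid A] [Module R A] [AddCommMonoid A'] [Module R A']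
  [AddCommMonoid B] [Module R B] [AddCommMonoid B'] [Module R B']

def prodSwapCongr (φ : A ≃ₗ[R] A') (ψ : B ≃ₗ[R] B') : ((X × B) × A) ≃ₗ[R] ((X × A') × B') :=
  ((((prodAssoc R X B A).trans ((refl R X).prodCongr (prodComm R B A))).trans
    (prodAssoc R X A B).symm).trans (((refl R X).prodCongr φ).prodCongr ψ))

end LinearEquiv

namespace QRep

section InjEnvelope

variable {Λ : Type} [Ring Λ] {M M' J J' K : Type} [AddCommGroup M] [Module Λ M]
  [AddCommGroup M'] [Module Λ M'] [AddCommGroup J] [Module Λ J]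
  [AddCommGroup J'] [Module Λ J'] [AddCommGroup K] [Module Λ K]

theorem IsInjEnvelope.injective_of_injective_comp {e : M →ₗ[Λ] J} (he : IsInjEnvelope e)
    {f : J →ₗ[Λ] K} (hf : Injective (f ∘ₗ e)) : Injective f := by
  rw [← ker_eq_bot]
  refine he.2.2 _ (Submodule.disjoint_def.mpr ?_)
  rintro _ hx ⟨m, rfl⟩
  rw [hf (show f (e m) = f (e 0) by simpa using hx), map_zero]

theorem IsInjEnvelope.comp_linearEquiv {e : M →ₗ[Λ] J} (he : IsInjEnvelope e)
    (σ : M' ≃ₗ[Λ] M) : IsInjEnvelope (e ∘ₗ σ.toLinearMap) := by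
  obtain ⟨hJ, heinj, hess⟩ := he
  refine ⟨hJ, heinj.comp σ.injective, fun W hW => hess W ?_⟩
  rwa [range_comp, LinearEquiv.range, Submodule.map_top] at hW

theorem IsInjEnvelope.exists_linearEquiv {e : M →ₗ[Λ] J} {e' : M →ₗ[Λ] J'}
    (he : IsInjEnvelope e) (he' : IsInjEnvelope e') :
    ∃ φ : J ≃ₗ[Λ] J', ∀ m, φ (e m) = e' m := by
  obtain ⟨h, hh⟩ := he'.1.out e he.2.1 e'
  have hh' : h ∘ₗ e = e' := LinearMap.ext hh
  have hinj : Injective h := he.injective_of_injective_comp (hh' ▸ he'.2.1)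
  obtain ⟨r, hr⟩ := he.1.out h hinj LinearMap.id
  have hr' : r ∘ₗ h = LinearMap.id := LinearMap.ext hr
  have hre : r ∘ₗ e' = e := by rw [← hh', ← LinearMap.comp_assoc, hr', LinearMap.id_comp]
  have rinj : Injective r := he'.injective_of_injective_comp (hre ▸ he.2.1)
  have rsurj : Surjective r := fun x => ⟨h x, hr x⟩
  refine ⟨(LinearEquiv.ofBijective r ⟨rinj, rsurj⟩).symm, fun m => ?_⟩
  rw [LinearEquiv.symm_apply_eq]
  exact (LinearMap.congr_fun hre m).symm

theorem IsInjEnvelope.exists_linearEquiv_of_linearEquiv {e : M →ₗ[Λ] J} {e' : M' →ₗ[Λ] J'}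
    (he : IsInjEnvelope e) (he' : IsInjEnvelope e') (σ : M ≃ₗ[Λ] M') :
    ∃ φ : J ≃ₗ[Λ] J', ∀ m, φ (e m) = e' (σ m) :=
  he.exists_linearEquiv (he'.comp_linearEquiv σ)

end InjEnvelope

variable {Λ : Type} [Ring Λ] {V : Type} {E : V → V → Type}

section EMap

variable {v w : V} {J : Type} [AddCommGroup J] [Module Λ J]

theorem EMap_self (M : QRep Λ E) (α : E v w) (e : M.obj v →ₗ[Λ] J) :
    EMap M α e α = Finsupp.lsingle (α := Path E w w) (@Quiver.Path.nil V ⟨E⟩ w) ∘ₗ e := by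
  unfold EMap
  rw [dif_pos rfl]
  generalize_proofs g1 g2
  rw [Subsingleton.elim g1 ⟨rfl, HEq.rfl⟩]
  conv_lhs => whnf
  rw [Subsingleton.elim (g2 α HEq.rfl) ⟨rfl, HEq.rfl⟩]
  rfl

theorem EMap_of_ne (M : QRep Λ E) (α : E v w) (e : M.obj v →ₗ[Λ] J) {i j : V} (γ : E i j)
    (hγ : (⟨i, j, γ⟩ : Σ a b : V, E a b) ≠ ⟨v, w, α⟩) :
    EMap M α e γ = 0 :=
  dif_neg hγ

theorem mapRange_EMap {M N : QRep Λ E} (σ : ∀ i, M.obj i → N.obj i) (α : E v w)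
    {J' : Type} [AddCommGroup J'] [Module Λ J'] {e : M.obj v →ₗ[Λ] J}
    {e' : N.obj v →ₗ[Λ] J'} (φ : J →ₗ[Λ] J') (hφ : ∀ x, φ (e x) = e' (σ v x))
    {i j : V} (γ : E i j) (x : M.obj i) :
    Finsupp.mapRange φ φ.map_zero (EMap M α e γ x) = EMap N α e' γ (σ i x) := by
  by_cases hγ : (⟨i, j, γ⟩ : Σ a b : V, E a b) = ⟨v, w, α⟩
  · obtain ⟨rfl, hγ⟩ := Sigma.mk.inj_iff.mp hγ
    obtain ⟨rfl, hγ⟩ := Sigma.mk.inj_iff.mp (eq_of_heq hγ)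
    obtain rfl := eq_of_heq hγ
    rw [EMap_self, EMap_self]
    exact Finsupp.mapRange_single.trans (congrArg _ (hφ x))
  · rw [EMap_of_ne _ _ _ _ hγ, EMap_of_ne _ _ _ _ hγ, LinearMap.zero_apply, LinearMap.zero_apply,
      Finsupp.mapRange_zero]

end EMap

theorem iso_monoA_monoA_of_linearEquiv (M : QRep Λ E) {a₁ a₂ b₁ b₂ : V} (α : E a₁ a₂)
    (β : E b₁ b₂) {J₁ J₂ J₃ J₄ : Type} [AddCommGroup J₁] [Module Λ J₁] [AddCommGroup J₂]
    [Module Λ J₂] [AddCommGroup J₃] [Module Λ J₃] [AddCommGroup J₄] [Module Λ J₄]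
    {e₁ : M.obj b₁ →ₗ[Λ] J₁} {e₂ : (MonoA M β e₁).obj a₁ →ₗ[Λ] J₂} {e₃ : M.obj a₁ →ₗ[Λ] J₃}
    {e₄ : (MonoA M α e₃).obj b₁ →ₗ[Λ] J₄} (φ : J₂ ≃ₗ[Λ] J₃) (hφ : ∀ x, φ (e₂ x) = e₃ x.1)
    (ψ : J₄ ≃ₗ[Λ] J₁) (hψ : ∀ x, ψ (e₄ x) = e₁ x.1) :
    Iso (MonoA (MonoA M β e₁) α e₂) (MonoA (MonoA M α e₃) β e₄) := by
  let T i : (MonoA (MonoA M β e₁) α e₂).obj i ≃ₗ[Λ] (MonoA (MonoA M α e₃) β e₄).obj i :=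
    LinearEquiv.prodSwapCongr (X := M.obj i) (Finsupp.mapRange.linearEquiv φ)
      (Finsupp.mapRange.linearEquiv ψ).symm
  have hφ' {i j : V} (γ : E i j) (m : M.obj i) (f : Path E b₂ i →₀ J₁) :
      Finsupp.mapRange φ φ.map_zero (EMap (MonoA M β e₁) α e₂ γ (m, f)) = EMap M α e₃ γ m :=
    mapRange_EMap (fun i => (MonoAProj M β e₁).app i) α φ.toLinearMap hφ γ (m, f)
  have hψ' {i j : V} (γ : E i j) (m : M.obj i) (g : Path E a₂ i →₀ J₃) :
      Finsupp.mapRange ψ ψ.map_zero (EMap (MonoA M α e₃) β e₄ γ (m, g)) = EMap M β e₁ γ m :=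
    mapRange_EMap (fun i => (MonoAProj M α e₃).app i) β ψ.toLinearMap hψ γ (m, g)
  refine ⟨⟨fun i => T i, fun {i j} γ => LinearMap.ext ?_⟩, fun i => (T i).bijective⟩
  rintro ⟨⟨m, f⟩, g⟩
  refine Prod.ext (Prod.ext rfl ?_) ?_
  · show Finsupp.mapDomain (β := Path E a₂ j) (fun p => @Quiver.Path.cons V ⟨E⟩ a₂ i j p γ)
        (Finsupp.mapRange φ φ.map_zero g) + EMap M α e₃ γ m =
      Finsupp.mapRange φ φ.map_zero (Finsupp.mapDomain (β := Path E a₂ j)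
        (fun p => @Quiver.Path.cons V ⟨E⟩ a₂ i j p γ) g + EMap (MonoA M β e₁) α e₂ γ (m, f))
    rw [Finsupp.mapRange_add (map_add φ), hφ']
    exact congrArg (· + _) (Finsupp.mapDomain_mapRange _ _ _ _ (map_add φ))
  · show Finsupp.mapDomain (β := Path E b₂ j) (fun p => @Quiver.Path.cons V ⟨E⟩ b₂ i j p γ)
        ((Finsupp.mapRange.linearEquiv ψ).symm f) +
        EMap (MonoA M α e₃) β e₄ γ (m, Finsupp.mapRange φ φ.map_zero g) =
      (Finsupp.mapRange.linearEquiv ψ).symm (Finsupp.mapDomain (β := Path E b₂ j)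
        (fun p => @Quiver.Path.cons V ⟨E⟩ b₂ i j p γ) f + EMap M β e₁ γ m)
    rw [LinearEquiv.eq_symm_apply, map_add]
    refine congrArg₂ (· + ·) ?_ (hψ' γ m _)
    exact (Finsupp.mapDomain_mapRange _ _ ψ ψ.map_zero (map_add ψ)).symm.trans
      (congrArg (Finsupp.mapDomain _) ((Finsupp.mapRange.linearEquiv ψ).apply_symm_apply f))

end QRep

theorem monoA_monoA_comm_general
    (Λ : Type) [Ring Λ]
    {V : Type} {E : V → V → Type}
    (M : QRep Λ E)
    {a₁ a₂ b₁ b₂ : V} (α : E a₁ a₂) (β : E b₁ b₂)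
    (hpath₁ : IsEmpty (QRep.Path E a₂ b₁)) (hpath₂ : IsEmpty (QRep.Path E b₂ a₁))
    (J₁ : Type) [AddCommGroup J₁] [Module Λ J₁] (e₁ : M.obj b₁ →ₗ[Λ] J₁)
    (he₁ : QRep.IsInjEnvelope e₁)
    (J₂ : Type) [AddCommGroup J₂] [Module Λ J₂]
    (e₂ : (QRep.MonoA M β e₁).obj a₁ →ₗ[Λ] J₂) (he₂ : QRep.IsInjEnvelope e₂)
    (J₃ : Type) [AddCommGroup J₃] [Module Λ J₃] (e₃ : M.obj a₁ →ₗ[Λ] J₃)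
    (he₃ : QRep.IsInjEnvelope e₃)
    (J₄ : Type) [AddCommGroup J₄] [Module Λ J₄]
    (e₄ : (QRep.MonoA M α e₃).obj b₁ →ₗ[Λ] J₄) (he₄ : QRep.IsInjEnvelope e₄) :
    QRep.Iso (QRep.MonoA (QRep.MonoA M β e₁) α e₂)
      (QRep.MonoA (QRep.MonoA M α e₃) β e₄) := by
  obtain ⟨φ, hφ⟩ := he₂.exists_linearEquiv_of_linearEquiv he₃ LinearEquiv.prodUnique
  obtain ⟨ψ, hψ⟩ := he₄.exists_linearEquiv_of_linearEquiv he₁ LinearEquiv.prodUnique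
  exact QRep.iso_monoA_monoA_of_linearEquiv M α β φ hφ ψ hψ

/-- If there is no path from `t(α)` to `s(β)` and no path from
`t(β)` to `s(α)`, then `Mono_α(Mono_β(M)) ≅ Mono_β(Mono_α(M))` (for any choices of
injective envelopes in the constructions). -/
theorem monoA_monoA_comm
    (k : Type) [Field k] (Λ : Type) [Ring Λ] [Algebra k Λ] [FiniteDimensional k Λ]
    (hself : Module.Injective Λ Λ)
    {V : Type} [Fintype V] {E : V → V → Type} [∀ i j, Fintype (E i j)]
    (hacyc : QRep.Acyclic E)
    (M : QRep Λ E) (hfin : ∀ i, Module.Finite Λ (M.obj i))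
    {a₁ a₂ b₁ b₂ : V} (α : E a₁ a₂) (β : E b₁ b₂)
    (hpath₁ : IsEmpty (QRep.Path E a₂ b₁)) (hpath₂ : IsEmpty (QRep.Path E b₂ a₁))
    (J₁ : Type) [AddCommGroup J₁] [Module Λ J₁] (e₁ : M.obj b₁ →ₗ[Λ] J₁)
    (he₁ : QRep.IsInjEnvelope e₁)
    (J₂ : Type) [AddCommGroup J₂] [Module Λ J₂]
    (e₂ : (QRep.MonoA M β e₁).obj a₁ →ₗ[Λ] J₂) (he₂ : QRep.IsInjEnvelope e₂)
    (J₃ : Type) [AddCommGroup J₃] [Module Λ J₃] (e₃ : M.obj a₁ →ₗ[Λ] J₃)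
    (he₃ : QRep.IsInjEnvelope e₃)
    (J₄ : Type) [AddCommGroup J₄] [Module Λ J₄]
    (e₄ : (QRep.MonoA M α e₃).obj b₁ →ₗ[Λ] J₄) (he₄ : QRep.IsInjEnvelope e₄) :
    QRep.Iso (QRep.MonoA (QRep.MonoA M β e₁) α e₂)
      (QRep.MonoA (QRep.MonoA M α e₃) β e₄) :=
  monoA_monoA_comm_general Λ M α β hpath₁ hpath₂ J₁ e₁ he₁ J₂ e₂ he₂ J₃ e₃ he₃ J₄ e₄ he₄
end
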